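/- arXiv:0906.2579 — 2 statements merged into one kernel-verified Lean document; each statement's English description precedes it below -/
import Mathlib

section
/- Let x, y, z be generators of a grid diagram of size N. For any D₁ ∈ 𝒟(x,y) and D₂ ∈ 𝒟(y,z), the pointwise sum D₁ + D₂ belongs to 𝒟(x,z) and μ(D₁ + D₂) = μ(D₁) + μ(D₂). Consequently, whenever 𝒟(x,y) and 𝒟(y,z) are nonempty, the relative gradings satisfy M(x,y) + M(y,z) = M(x,z) and A(x,y) + A(y,z) = A(x,z). -/
/-- A generator of a grid diagram of size `N`: a permutation of `ℤ/N`. -/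
abbrev GridGen (N : ℕ) := Equiv.Perm (ZMod N)

/-- The alternating corner sum of a 2-chain `D` at the lattice point `(a, b)`. -/
def cornerSum (N : ℕ) (D : ZMod N → ZMod N → ℤ) (a b : ZMod N) : ℤ :=
  D a b - D (a - 1) b - D a (b - 1) + D (a - 1) (b - 1)

/-- `D` is a domain from the generator `x` to the generator `y`: the alternating
corner sum at a lattice point `p` is `1` if `p ∈ x \ y`, `-1` if `p ∈ y \ x`, and
`0` otherwise. -/
def IsGridDomain (N : ℕ) (x y : GridGen N) (D : ZMod N → ZMod N → ℤ) : Prop :=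
  ∀ a b : ZMod N, cornerSum N D a b =
    if x a = b ∧ y a ≠ b then 1 else if y a = b ∧ x a ≠ b then -1 else 0

/-- The point measure `n_p(D)` at the lattice point `p = (a, b)`: the average of
the values of `D` on the four squares around `p`. -/
def gridNp (N : ℕ) (D : ZMod N → ZMod N → ℤ) (a b : ZMod N) : ℚ :=
  ((D a b : ℚ) + (D (a - 1) b : ℚ) + (D a (b - 1) : ℚ) + (D (a - 1) (b - 1) : ℚ)) / 4

/-- The Maslov index `μ(D) = Σ_i (n_{(i, x i)}(D) + n_{(i, y i)}(D))`. -/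
def maslovIndex (N : ℕ) [NeZero N] (x y : GridGen N) (D : ZMod N → ZMod N → ℤ) : ℚ :=
  ∑ i : ZMod N, (gridNp N D i (x i) + gridNp N D i (y i))

/-!
For a domain `E ∈ 𝒟(u, v)`, summing the corner sums of `E` over the four corners of a square
gives the number of its corners on `u` minus the number on `v`. Hence, writing `n_w(D)` for
`∑_i n_{(i, w i)}(D)`, we get `4 (n_u(D) - n_v(D)) = ⟨D, ΔE⟩` with `Δ = (T₁ - T₁⁻¹)(T₂ - T₂⁻¹)`.
As `Δ` is symmetric, `D₁ ∈ 𝒟(x, y)` and `D₂ ∈ 𝒟(y, z)` satisfy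
`n_x(D₂) - n_y(D₂) = n_y(D₁) - n_z(D₁)`, which is the additivity of `μ`.

Two domains with the same ends differ by a 2-chain without corners, which on the torus has the
form `f a + g b`. Adding it changes both `μ` and `2 ∑_i n_{O_i}` by `2 (∑ f + ∑ g)` and does not
change `A`.
-/

open Finset

variable {N : ℕ}

theorem cornerSum_add (D E : ZMod N → ZMod N → ℤ) (a b : ZMod N) :
    cornerSum N (fun a b => D a b + E a b) a b = cornerSum N D a b + cornerSum N E a b := by
  simp only [cornerSum]
  ring

theorem cornerSum_sub (D E : ZMod N → ZMod N → ℤ) (a b : ZMod N) :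
    cornerSum N (fun a b => D a b - E a b) a b = cornerSum N D a b - cornerSum N E a b := by
  simp only [cornerSum]
  ring

theorem isGridDomain_iff {x y : GridGen N} {D : ZMod N → ZMod N → ℤ} :
    IsGridDomain N x y D ↔ ∀ a b, cornerSum N D a b =
      (if x a = b then 1 else 0) - (if y a = b then 1 else 0) := by
  refine forall₂_congr fun a b => ?_
  by_cases hx : x a = b <;> by_cases hy : y a = b <;> simp [hx, hy]

theorem IsGridDomain.add {x y z : GridGen N} {D₁ D₂ : ZMod N → ZMod N → ℤ}
    (h₁ : IsGridDomain N x y D₁) (h₂ : IsGridDomain N y z D₂) :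
    IsGridDomain N x z (fun a b => D₁ a b + D₂ a b) := by
  rw [isGridDomain_iff] at *
  intro a b
  rw [cornerSum_add, h₁, h₂]
  ring

def cornerCount (w : GridGen N) (a b : ZMod N) : ℤ :=
  (if w a = b then 1 else 0) + (if w (a + 1) = b then 1 else 0) +
    (if w a = b + 1 then 1 else 0) + (if w (a + 1) = b + 1 then 1 else 0)

def cornerTotal (N : ℕ) (E : ZMod N → ZMod N → ℤ) (a b : ZMod N) : ℤ :=
  cornerSum N E a b + cornerSum N E (a + 1) b + cornerSum N E a (b + 1) +
    cornerSum N E (a + 1) (b + 1)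

theorem IsGridDomain.cornerCount_sub_cornerCount {u v : GridGen N}
    {E : ZMod N → ZMod N → ℤ} (h : IsGridDomain N u v E) (a b : ZMod N) :
    cornerCount u a b - cornerCount v a b = cornerTotal N E a b := by
  simp only [cornerTotal, cornerCount, isGridDomain_iff.mp h]
  ring

theorem cornerTotal_eq (E : ZMod N → ZMod N → ℤ) (a b : ZMod N) :
    cornerTotal N E a b =
      E (a - 1) (b - 1) - E (a + 1) (b - 1) - E (a - 1) (b + 1) + E (a + 1) (b + 1) := by
  simp only [cornerTotal, cornerSum, add_sub_cancel_right]
  ring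

section Torus

variable [NeZero N]

theorem sum_sum_mul_shift (D E : ZMod N → ZMod N → ℤ) (s t : ZMod N) :
    ∑ a, ∑ b, D a b * E (a + s) (b + t) = ∑ a, ∑ b, D (a - s) (b - t) * E a b := by
  rw [← (Equiv.subRight s).sum_comp]
  refine sum_congr rfl fun a _ => ?_
  rw [← (Equiv.subRight t).sum_comp]
  simp only [Equiv.subRight_apply, sub_add_cancel]

/-- `cornerTotal` is the product `(T₁ - T₁⁻¹)(T₂ - T₂⁻¹)` of central differences, each
antisymmetric for the pairing `∑ D * E`. -/
theorem sum_sum_mul_cornerTotal_comm (D E : ZMod N → ZMod N → ℤ) :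
    ∑ a, ∑ b, D a b * cornerTotal N E a b = ∑ a, ∑ b, E a b * cornerTotal N D a b := by
  have shift (s t : ZMod N) :
      ∑ a, ∑ b, D a b * E (a + s) (b + t) = ∑ a, ∑ b, E a b * D (a + -s) (b + -t) := by
    rw [sum_sum_mul_shift]
    simp only [mul_comm, sub_eq_add_neg]
  simp only [cornerTotal_eq, sub_eq_add_neg, mul_add, mul_neg, sum_add_distrib, sum_neg_distrib,
    shift, neg_neg]
  abel

/-- Four times `∑_i n_{(i, w i)}(D)`: each square is counted once per corner lying on `w`. -/
def cornerPairing (D : ZMod N → ZMod N → ℤ) (w : GridGen N) : ℤ :=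
  ∑ a, ∑ b, D a b * cornerCount w a b

theorem IsGridDomain.cornerPairing_sub_cornerPairing {u v : GridGen N}
    {E : ZMod N → ZMod N → ℤ} (h : IsGridDomain N u v E) (D : ZMod N → ZMod N → ℤ) :
    cornerPairing D u - cornerPairing D v = ∑ a, ∑ b, D a b * cornerTotal N E a b := by
  simp only [cornerPairing, ← sum_sub_distrib, ← mul_sub, h.cornerCount_sub_cornerCount]

theorem IsGridDomain.cornerPairing_exchange {x y z : GridGen N} {D₁ D₂ : ZMod N → ZMod N → ℤ}
    (h₁ : IsGridDomain N x y D₁) (h₂ : IsGridDomain N y z D₂) :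
    cornerPairing D₂ x - cornerPairing D₂ y = cornerPairing D₁ y - cornerPairing D₁ z := by
  rw [h₁.cornerPairing_sub_cornerPairing, h₂.cornerPairing_sub_cornerPairing,
    sum_sum_mul_cornerTotal_comm]

theorem cornerPairing_eq_sum (D : ZMod N → ZMod N → ℤ) (w : GridGen N) :
    cornerPairing D w =
      ∑ i, (D i (w i) + D (i - 1) (w i) + D i (w i - 1) + D (i - 1) (w i - 1)) := by
  have shift (f : ZMod N → ZMod N) : ∑ a, D a (f (a + 1)) = ∑ i, D (i - 1) (f i) :=
    Fintype.sum_equiv (Equiv.addRight 1) _ _ fun a => by simp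
  have corner_below (u v : ZMod N) : u = v + 1 ↔ u - 1 = v := sub_eq_iff_eq_add.symm
  simp only [cornerPairing, cornerCount, corner_below, mul_add, mul_ite, mul_one,
    mul_zero, sum_add_distrib, sum_ite_eq, mem_univ, if_true]
  rw [shift w, shift (w · - 1)]

theorem sum_gridNp_eq (D : ZMod N → ZMod N → ℤ) (w : GridGen N) :
    ∑ i, gridNp N D i (w i) = (cornerPairing D w : ℚ) / 4 := by
  simp only [cornerPairing_eq_sum, gridNp]
  push_cast
  rw [sum_div]

theorem maslovIndex_eq (x y : GridGen N) (D : ZMod N → ZMod N → ℤ) :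
    maslovIndex N x y D = ((cornerPairing D x : ℚ) + cornerPairing D y) / 4 := by
  rw [maslovIndex, sum_add_distrib, sum_gridNp_eq, sum_gridNp_eq, add_div]

theorem cornerPairing_add (D E : ZMod N → ZMod N → ℤ) (w : GridGen N) :
    cornerPairing (fun a b => D a b + E a b) w = cornerPairing D w + cornerPairing E w := by
  simp only [cornerPairing, add_mul, sum_add_distrib]

theorem maslovIndex_add (x y : GridGen N) (D E : ZMod N → ZMod N → ℤ) :
    maslovIndex N x y (fun a b => D a b + E a b) = maslovIndex N x y D + maslovIndex N x y E := by
  simp only [maslovIndex_eq, cornerPairing_add]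
  push_cast
  ring

theorem IsGridDomain.maslovIndex_juxtapose {x y z : GridGen N} {D₁ D₂ : ZMod N → ZMod N → ℤ}
    (h₁ : IsGridDomain N x y D₁) (h₂ : IsGridDomain N y z D₂) :
    maslovIndex N x z (fun a b => D₁ a b + D₂ a b) =
      maslovIndex N x y D₁ + maslovIndex N y z D₂ := by
  have exchange : (cornerPairing D₂ x : ℚ) - cornerPairing D₂ y =
      cornerPairing D₁ y - cornerPairing D₁ z := mod_cast h₁.cornerPairing_exchange h₂
  rw [maslovIndex_add, maslovIndex_eq, maslovIndex_eq, maslovIndex_eq, maslovIndex_eq]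
  linarith

theorem cornerPairing_rowCol (f g : ZMod N → ℤ) (w : GridGen N) :
    cornerPairing (fun a b => f a + g b) w = 4 * (∑ a, f a + ∑ b, g b) := by
  have hf : ∑ i, f (i - 1) = ∑ i, f i := (Equiv.subRight 1).sum_comp f
  have hg : ∑ i, g (w i - 1) = ∑ i, g i := (w.trans (Equiv.subRight 1)).sum_comp g
  simp only [cornerPairing_eq_sum, sum_add_distrib, hf, hg, Equiv.sum_comp w g]
  ring

theorem maslovIndex_rowCol (x y : GridGen N) (f g : ZMod N → ℤ) :
    maslovIndex N x y (fun a b => f a + g b) = 2 * ((∑ a, f a : ℤ) + ∑ b, g b : ℚ) := by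
  rw [maslovIndex_eq, cornerPairing_rowCol, cornerPairing_rowCol]
  push_cast
  ring

theorem Function.Periodic.apply_zmod_eq_apply_zero {M : Type*} {ψ : ZMod N → M}
    (h : Function.Periodic ψ 1) (a : ZMod N) : ψ a = ψ 0 := by
  simpa using h.nat_mul_eq a.val

theorem eq_of_cornerSum_eq_zero {E : ZMod N → ZMod N → ℤ}
    (hE : ∀ a b, cornerSum N E a b = 0) (a b : ZMod N) : E a b = E a 0 + E 0 b - E 0 0 := by
  have columns (p q : ZMod N) : E p q - E (p - 1) q = E p 0 - E (p - 1) 0 :=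
    Function.Periodic.apply_zmod_eq_apply_zero (ψ := fun q => E p q - E (p - 1) q) (fun q => by
      have := hE p (q + 1)
      simp only [cornerSum, add_sub_cancel_right] at this
      linarith) q
  have rows : E a b - E a 0 = E 0 b - E 0 0 :=
    Function.Periodic.apply_zmod_eq_apply_zero (ψ := fun p => E p b - E p 0) (fun p => by
      have := columns (p + 1) b
      simp only [add_sub_cancel_right] at this
      linarith) a
  linarith

theorem IsGridDomain.exists_eq_add_rowCol {x y : GridGen N}
    {D D' : ZMod N → ZMod N → ℤ} (h : IsGridDomain N x y D) (h' : IsGridDomain N x y D') :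
    ∃ f g : ZMod N → ℤ, D' = fun a b => D a b + (f a + g b) := by
  have noCorners (a b : ZMod N) : cornerSum N (fun a b => D' a b - D a b) a b = 0 := by
    rw [cornerSum_sub, isGridDomain_iff.mp h, isGridDomain_iff.mp h', sub_self]
  refine ⟨fun a => D' a 0 - D a 0 - (D' 0 0 - D 0 0), fun b => D' 0 b - D 0 b, ?_⟩
  funext a b
  have := eq_of_cornerSum_eq_zero noCorners a b
  simp only at this ⊢
  linarith

section Gradings

variable (σO σX : GridGen N)

def maslovGrading (x y : GridGen N) (D : ZMod N → ZMod N → ℤ) : ℚ :=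
  maslovIndex N x y D - 2 * ∑ i, (D i (σO i) : ℚ)

def alexanderGrading (D : ZMod N → ZMod N → ℤ) : ℤ :=
  ∑ i, (D i (σX i) - D i (σO i))

theorem IsGridDomain.maslovGrading_juxtapose {x y z : GridGen N} {D₁ D₂ : ZMod N → ZMod N → ℤ}
    (h₁ : IsGridDomain N x y D₁) (h₂ : IsGridDomain N y z D₂) :
    maslovGrading σO x y D₁ + maslovGrading σO y z D₂ =
      maslovGrading σO x z (fun a b => D₁ a b + D₂ a b) := by
  simp only [maslovGrading, h₁.maslovIndex_juxtapose h₂]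
  push_cast
  rw [sum_add_distrib]
  ring

theorem maslovGrading_add_rowCol (x y : GridGen N) (D : ZMod N → ZMod N → ℤ)
    (f g : ZMod N → ℤ) :
    maslovGrading σO x y (fun a b => D a b + (f a + g b)) = maslovGrading σO x y D := by
  rw [maslovGrading, maslovGrading, maslovIndex_add x y D (fun a b => f a + g b),
    maslovIndex_rowCol]
  push_cast
  rw [sum_add_distrib, sum_add_distrib, Equiv.sum_comp σO (fun b => (g b : ℚ))]
  ring

theorem alexanderGrading_add (D E : ZMod N → ZMod N → ℤ) :
    alexanderGrading σO σX (fun a b => D a b + E a b) =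
      alexanderGrading σO σX D + alexanderGrading σO σX E := by
  simp only [alexanderGrading, ← sum_add_distrib]
  exact sum_congr rfl fun i _ => by ring

theorem alexanderGrading_add_rowCol (D : ZMod N → ZMod N → ℤ) (f g : ZMod N → ℤ) :
    alexanderGrading σO σX (fun a b => D a b + (f a + g b)) = alexanderGrading σO σX D := by
  have cancel (i : ZMod N) : D i (σX i) + (f i + g (σX i)) - (D i (σO i) + (f i + g (σO i))) =
      D i (σX i) - D i (σO i) + (g (σX i) - g (σO i)) := by ring
  simp only [alexanderGrading, cancel, sum_add_distrib, sum_sub_distrib, Equiv.sum_comp σX g,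
    Equiv.sum_comp σO g, sub_self, add_zero]

end Gradings

end Torus

theorem relative_gradings_additive_general (N : ℕ) [NeZero N]
    (σO σX : GridGen N)
    (x y z : GridGen N) (D₁ D₂ : ZMod N → ZMod N → ℤ)
    (h₁ : IsGridDomain N x y D₁) (h₂ : IsGridDomain N y z D₂) :
    IsGridDomain N x z (fun a b => D₁ a b + D₂ a b) ∧
      maslovIndex N x z (fun a b => D₁ a b + D₂ a b) =
        maslovIndex N x y D₁ + maslovIndex N y z D₂ ∧
      ∀ D₃ : ZMod N → ZMod N → ℤ, IsGridDomain N x z D₃ →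
        ((maslovIndex N x y D₁ - 2 * ∑ i : ZMod N, (D₁ i (σO i) : ℚ)) +
            (maslovIndex N y z D₂ - 2 * ∑ i : ZMod N, (D₂ i (σO i) : ℚ)) =
          maslovIndex N x z D₃ - 2 * ∑ i : ZMod N, (D₃ i (σO i) : ℚ)) ∧
        ((∑ i : ZMod N, (D₁ i (σX i) - D₁ i (σO i))) +
            (∑ i : ZMod N, (D₂ i (σX i) - D₂ i (σO i))) =
          ∑ i : ZMod N, (D₃ i (σX i) - D₃ i (σO i))) := by
  have h₁₂ := h₁.add h₂
  refine ⟨h₁₂, h₁.maslovIndex_juxtapose h₂, fun D₃ h₃ => ?_⟩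
  obtain ⟨f, g, rfl⟩ := h₁₂.exists_eq_add_rowCol h₃
  exact ⟨(h₁.maslovGrading_juxtapose σO h₂).trans (maslovGrading_add_rowCol σO x z _ f g).symm,
    (alexanderGrading_add σO σX D₁ D₂).symm.trans (alexanderGrading_add_rowCol σO σX _ f g).symm⟩

/-- For `D₁ ∈ 𝒟(x,y)` and `D₂ ∈ 𝒟(y,z)`, the pointwise sum
`D₁ + D₂` belongs to `𝒟(x,z)` and `μ(D₁ + D₂) = μ(D₁) + μ(D₂)`.  Consequently
the relative Maslov and Alexander gradings are additive:
`M(x,y) + M(y,z) = M(x,z)` and `A(x,y) + A(y,z) = A(x,z)`. -/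
theorem relative_gradings_additive (N : ℕ) [NeZero N] (hN : 2 ≤ N)
    (σO σX : GridGen N) (hσ : ∀ i : ZMod N, σO i ≠ σX i)
    (x y z : GridGen N) (D₁ D₂ : ZMod N → ZMod N → ℤ)
    (h₁ : IsGridDomain N x y D₁) (h₂ : IsGridDomain N y z D₂) :
    IsGridDomain N x z (fun a b => D₁ a b + D₂ a b) ∧
      maslovIndex N x z (fun a b => D₁ a b + D₂ a b) =
        maslovIndex N x y D₁ + maslovIndex N y z D₂ ∧
      ∀ D₃ : ZMod N → ZMod N → ℤ, IsGridDomain N x z D₃ →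
        ((maslovIndex N x y D₁ - 2 * ∑ i : ZMod N, (D₁ i (σO i) : ℚ)) +
            (maslovIndex N y z D₂ - 2 * ∑ i : ZMod N, (D₂ i (σO i) : ℚ)) =
          maslovIndex N x z D₃ - 2 * ∑ i : ZMod N, (D₃ i (σO i) : ℚ)) ∧
        ((∑ i : ZMod N, (D₁ i (σX i) - D₁ i (σO i))) +
            (∑ i : ZMod N, (D₂ i (σX i) - D₂ i (σO i))) =
          ∑ i : ZMod N, (D₃ i (σX i) - D₃ i (σO i))) :=
  relative_gradings_additive_general N σO σX x y z D₁ D₂ h₁ h₂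
end

section
/- Let x, y be generators of a grid diagram of size N and let D ∈ 𝒟(x,y). Then M(x) − M(y) = μ(D) − 2·Σ_i n_{O_i}(D); that is, the absolute Maslov grading defined by the J-formula refines the relative Maslov grading computed from domains. -/
/-- `J(a, b) = 1/2` if `(a₁ - b₁)(a₂ - b₂) > 0` and `0` otherwise. -/
noncomputable def Jpt (p q : ℝ × ℝ) : ℚ :=
  if 0 < (p.1 - q.1) * (p.2 - q.2) then 1 / 2 else 0

/-- The planar point corresponding to a coordinate `(i, b)` of a generator,
representing `ℤ/N` by `{0, 1, …, N-1} ⊂ ℝ`. -/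
noncomputable def genPt (N : ℕ) (i b : ZMod N) : ℝ × ℝ :=
  ((ZMod.val i : ℝ), (ZMod.val b : ℝ))

/-- The planar point of the marking in column `i` determined by the permutation
`σ`: the centre `(i + 1/2, σ i + 1/2)` of the square `(i, σ i)`. -/
noncomputable def markPt (N : ℕ) (σ : GridGen N) (i : ZMod N) : ℝ × ℝ :=
  ((ZMod.val i : ℝ) + 1 / 2, (ZMod.val (σ i) : ℝ) + 1 / 2)

/-- The absolute Maslov grading `M(x) = J(x - 𝕆, x - 𝕆) + 1`, with `J` extended
bilinearly to formal sums of points. -/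
noncomputable def MaslovGrading (N : ℕ) [NeZero N] (σO : GridGen N) (x : GridGen N) : ℚ :=
  (∑ i : ZMod N, ∑ j : ZMod N,
      (Jpt (genPt N i (x i)) (genPt N j (x j)) - Jpt (genPt N i (x i)) (markPt N σO j) -
        Jpt (markPt N σO i) (genPt N j (x j)) + Jpt (markPt N σO i) (markPt N σO j))) + 1

/-- The absolute Alexander grading
`A(x) = J(x - (𝕏 + 𝕆)/2, 𝕏 - 𝕆) - (N - 1)/2`, with `J` extended bilinearly to
formal sums of points. -/
noncomputable def AlexGrading (N : ℕ) [NeZero N] (σO σX : GridGen N) (x : GridGen N) : ℚ :=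
  (∑ i : ZMod N, ∑ j : ZMod N,
      (Jpt (genPt N i (x i)) (markPt N σX j) - Jpt (genPt N i (x i)) (markPt N σO j) -
        (1 / 2) * Jpt (markPt N σX i) (markPt N σX j) +
        (1 / 2) * Jpt (markPt N σX i) (markPt N σO j) -
        (1 / 2) * Jpt (markPt N σO i) (markPt N σX j) +
        (1 / 2) * Jpt (markPt N σO i) (markPt N σO j))) - ((N : ℚ) - 1) / 2

/-!
Any two domains from `x` to `y` differ by a 2-chain with vanishing corner sums, i.e. one of
the form `f a + g b`, and on such chains `μ` and `2 n_𝕆` agree; so it suffices to treat the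
staircase domain `D₀(a, b) = #{x-points weakly below-left of (a, b)} - #{y-points …}`.
Averaging, `n_p(D₀)` and `D₀` on the square of `O_i` are both `K(p, x - y)` for the kernel
`K(p, q) = H(p₁ - q₁) H(p₂ - q₂)` with `H(0) = 1/2`, so the right-hand side is
`K(x + y - 2𝕆, x - y)`. Pointwise `K = J + (function of p₁ - q₁) + (function of p₂ - q₂)
+ [p, q share a coordinate]/4`. The one-coordinate terms pair to zero with `x - y`, since `x`
and `y` occupy the same columns and the same rows; the tie term cancels too, because the only
ties within one generator are the diagonal ones and 𝕆 shares no coordinate with a generator.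
What is left is `J(x + y - 2𝕆, x - y) = M(x) - M(y)`.
-/

open Finset

noncomputable section

def heaviside (t : ℝ) : ℚ := if 0 < t then 1 else if t = 0 then 1 / 2 else 0

def quadrantWeight (p q : ℝ × ℝ) : ℚ := heaviside (p.1 - q.1) * heaviside (p.2 - q.2)

def tieIndicator (p q : ℝ × ℝ) : ℚ := if p.1 = q.1 ∨ p.2 = q.2 then 1 else 0

lemma heaviside_natCast_sub (m n : ℕ) :
    heaviside ((m : ℝ) - n) =
      ((if (n : ℤ) ≤ m then 1 else 0) + (if (n : ℤ) ≤ m - 1 then 1 else 0)) / 2 := by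
  unfold heaviside
  simp only [sub_pos, sub_eq_zero, Nat.cast_lt, Nat.cast_inj]
  split_ifs <;> (try norm_num) <;> omega

lemma heaviside_natCast_add_half_sub (m n : ℕ) :
    heaviside ((m : ℝ) + 1 / 2 - n) = if (n : ℤ) ≤ m then 1 else 0 := by
  unfold heaviside
  rcases le_or_gt n m with h | h
  · have : (n : ℝ) ≤ m := by exact_mod_cast h
    have : 0 < (m : ℝ) + 1 / 2 - n := by linarith
    rw [if_pos this, if_pos (by omega)]
  · have : (m : ℝ) + 1 ≤ n := by exact_mod_cast h
    have : (m : ℝ) + 1 / 2 - n < 0 := by linarith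
    rw [if_neg (not_lt_of_gt this), if_neg this.ne, if_neg (by omega)]

lemma Jpt_comm (p q : ℝ × ℝ) : Jpt p q = Jpt q p := by
  unfold Jpt
  rw [← neg_sub p.1, ← neg_sub p.2, neg_mul_neg]

lemma tieIndicator_comm (p q : ℝ × ℝ) : tieIndicator p q = tieIndicator q p := by
  simp only [tieIndicator, eq_comm]

lemma quadrantWeight_eq (p q : ℝ × ℝ) :
    quadrantWeight p q = Jpt p q + (heaviside (p.1 - q.1) - 1 / 2) / 2
      + (heaviside (p.2 - q.2) - 1 / 2) / 2 + tieIndicator p q / 4 := by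
  unfold quadrantWeight Jpt tieIndicator heaviside
  simp only [← sub_eq_zero (a := p.1), ← sub_eq_zero (a := p.2)]
  generalize p.1 - q.1 = u
  generalize p.2 - q.2 = v
  rcases lt_trichotomy u 0 with hu | hu | hu <;> rcases lt_trichotomy v 0 with hv | hv | hv <;>
    simp [hu, hv, mul_pos_iff, not_lt_of_gt, ne_of_lt, ne_of_gt] <;> norm_num

section Pairing

variable {ι κ : Type*} [Fintype ι] [Fintype κ]

def pairing (F : ℝ × ℝ → ℝ × ℝ → ℚ) (P : κ → ℝ × ℝ) (Q : ι → ℝ × ℝ) : ℚ :=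
  ∑ i, ∑ j, F (P i) (Q j)

lemma pairing_comm {F : ℝ × ℝ → ℝ × ℝ → ℚ} (hF : ∀ p q, F p q = F q p) (P : κ → ℝ × ℝ)
    (Q : ι → ℝ × ℝ) :
    pairing F P Q = pairing F Q P := by
  rw [pairing, sum_comm]
  exact sum_congr rfl fun _ _ => sum_congr rfl fun _ _ => hF _ _

lemma sum_quadrantWeight_sub {Q Q' : ι → ℝ × ℝ} (π ρ : Equiv.Perm ι)
    (hfst : ∀ j, (Q' j).1 = (Q (π j)).1) (hsnd : ∀ j, (Q' j).2 = (Q (ρ j)).2) (p : ℝ × ℝ) :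
    ∑ j, quadrantWeight p (Q j) - ∑ j, quadrantWeight p (Q' j) =
      ∑ j, Jpt p (Q j) - ∑ j, Jpt p (Q' j) +
        (∑ j, tieIndicator p (Q j) - ∑ j, tieIndicator p (Q' j)) / 4 := by
  have hfst_sum : ∑ j, (heaviside (p.1 - (Q' j).1) - 1 / 2) =
      ∑ j, (heaviside (p.1 - (Q j).1) - 1 / 2) := by
    simp only [hfst]
    exact Equiv.sum_comp π fun j => heaviside (p.1 - (Q j).1) - 1 / 2
  have hsnd_sum : ∑ j, (heaviside (p.2 - (Q' j).2) - 1 / 2) =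
      ∑ j, (heaviside (p.2 - (Q j).2) - 1 / 2) := by
    simp only [hsnd]
    exact Equiv.sum_comp ρ fun j => heaviside (p.2 - (Q j).2) - 1 / 2
  simp only [quadrantWeight_eq, sum_add_distrib, ← sum_div]
  rw [hfst_sum, hsnd_sum]
  ring

lemma pairing_quadrantWeight_sub {Q Q' : ι → ℝ × ℝ} (π ρ : Equiv.Perm ι)
    (hfst : ∀ j, (Q' j).1 = (Q (π j)).1) (hsnd : ∀ j, (Q' j).2 = (Q (ρ j)).2)
    (P : κ → ℝ × ℝ) :
    pairing quadrantWeight P Q - pairing quadrantWeight P Q' =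
      pairing Jpt P Q - pairing Jpt P Q' +
        (pairing tieIndicator P Q - pairing tieIndicator P Q') / 4 := by
  unfold pairing
  rw [← sum_sub_distrib]
  simp only [sum_quadrantWeight_sub π ρ hfst hsnd]
  rw [sum_add_distrib, sum_sub_distrib, ← sum_div, sum_sub_distrib]

end Pairing

section Grid

variable {N : ℕ}

def genPts (z : GridGen N) (i : ZMod N) : ℝ × ℝ := genPt N i (z i)

lemma natCast_add_half_ne_natCast (m n : ℕ) : (m : ℝ) + 1 / 2 ≠ n := by
  intro h
  have : ((2 * m + 1 : ℕ) : ℝ) = ((2 * n : ℕ) : ℝ) := by push_cast; linarith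
  have : 2 * m + 1 = 2 * n := by exact_mod_cast this
  omega

lemma tieIndicator_genPts [NeZero N] (z : GridGen N) (i j : ZMod N) :
    tieIndicator (genPts z i) (genPts z j) = if i = j then 1 else 0 := by
  simp only [tieIndicator, genPts, genPt, Nat.cast_inj, (ZMod.val_injective N).eq_iff,
    z.injective.eq_iff, or_self]

lemma tieIndicator_markPt_genPts (σ z : GridGen N) (i j : ZMod N) :
    tieIndicator (markPt N σ i) (genPts z j) = 0 := by
  simp only [tieIndicator, markPt, genPts, genPt, natCast_add_half_ne_natCast, or_self,
    if_false]

lemma pairing_quadrantWeight_genPts_sub [NeZero N] (x y : GridGen N) {κ : Type*} [Fintype κ]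
    (P : κ → ℝ × ℝ) :
    pairing quadrantWeight P (genPts x) - pairing quadrantWeight P (genPts y) =
      pairing Jpt P (genPts x) - pairing Jpt P (genPts y) +
        (pairing tieIndicator P (genPts x) - pairing tieIndicator P (genPts y)) / 4 :=
  pairing_quadrantWeight_sub (Q := genPts x) (Q' := genPts y) 1 (y.trans x.symm) (fun _ => rfl)
    (fun j => by simp [genPts, genPt]) P

lemma maslovGrading_eq_pairing [NeZero N] (σO x : GridGen N) :
    MaslovGrading N σO x =
      pairing Jpt (genPts x) (genPts x) - 2 * pairing Jpt (markPt N σO) (genPts x) +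
        pairing Jpt (markPt N σO) (markPt N σO) + 1 := by
  have hsymm := pairing_comm Jpt_comm (genPts x) (markPt N σO)
  simp only [pairing, genPts] at hsymm ⊢
  simp only [MaslovGrading, sum_add_distrib, sum_sub_distrib]
  linarith

end Grid

section StairDomain

variable {N : ℕ} [NeZero N]

def quadrantCount (z : GridGen N) (s t : ℤ) : ℤ :=
  ∑ i, if (i.val : ℤ) ≤ s ∧ ((z i).val : ℤ) ≤ t then 1 else 0

def staircase (x y : GridGen N) (s t : ℤ) : ℤ := quadrantCount x s t - quadrantCount y s t

def stairDomain (x y : GridGen N) (a b : ZMod N) : ℤ := staircase x y a.val b.val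

lemma quadrantCount_of_neg_left (z : GridGen N) {s : ℤ} (hs : s < 0) (t : ℤ) :
    quadrantCount z s t = 0 :=
  sum_eq_zero fun i _ => if_neg fun h => by omega

lemma quadrantCount_of_neg_right (z : GridGen N) (s : ℤ) {t : ℤ} (ht : t < 0) :
    quadrantCount z s t = 0 :=
  sum_eq_zero fun i _ => if_neg fun h => by omega

lemma quadrantCount_of_le_left (z : GridGen N) {s : ℤ} (hs : (N : ℤ) - 1 ≤ s) (t : ℤ) :
    quadrantCount z s t = ∑ i : ZMod N, if (i.val : ℤ) ≤ t then 1 else 0 := by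
  rw [← Equiv.sum_comp z]
  refine sum_congr rfl fun i _ => if_congr (and_iff_right ?_) rfl rfl
  have := ZMod.val_lt i
  omega

lemma quadrantCount_of_le_right (z : GridGen N) (s : ℤ) {t : ℤ} (ht : (N : ℤ) - 1 ≤ t) :
    quadrantCount z s t = ∑ i : ZMod N, if (i.val : ℤ) ≤ s then 1 else 0 := by
  refine sum_congr rfl fun i _ => if_congr (and_iff_left ?_) rfl rfl
  have := ZMod.val_lt (z i)
  omega

lemma val_sub_one_of_ne_zero {a : ZMod N} (ha : a ≠ 0) : ((a - 1).val : ℤ) = a.val - 1 := by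
  have hpos : 0 < a.val := ZMod.val_pos.mpr ha
  have hone : (1 : ZMod N).val = 1 := by
    rw [ZMod.val_one_eq_one_mod, Nat.mod_eq_of_lt]
    have := ZMod.val_lt a
    omega
  rw [ZMod.val_sub (by omega), hone]
  omega

lemma val_zero_sub_one : (((0 : ZMod N) - 1).val : ℤ) = N - 1 := by
  obtain ⟨m, rfl⟩ : ∃ m, N = m + 1 := ⟨N - 1, (Nat.succ_pred_eq_of_pos (NeZero.pos N)).symm⟩
  rw [zero_sub, ZMod.val_neg_one]
  push_cast
  ring

variable (x y : GridGen N)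

lemma staircase_val_sub_one_left (a : ZMod N) (t : ℤ) :
    staircase x y ((a - 1).val) t = staircase x y (a.val - 1) t := by
  by_cases ha : a = 0
  -- the index wraps to `N - 1`; that column, like column `-1`, carries as many `x`- as `y`-points
  · subst ha
    rw [val_zero_sub_one, staircase, staircase, quadrantCount_of_le_left x le_rfl,
      quadrantCount_of_le_left y le_rfl, ZMod.val_zero, quadrantCount_of_neg_left x (by omega),
      quadrantCount_of_neg_left y (by omega)]
    ring
  · rw [val_sub_one_of_ne_zero ha]

lemma staircase_val_sub_one_right (s : ℤ) (b : ZMod N) :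
    staircase x y s ((b - 1).val) = staircase x y s (b.val - 1) := by
  by_cases hb : b = 0
  · subst hb
    rw [val_zero_sub_one, staircase, staircase, quadrantCount_of_le_right x s le_rfl,
      quadrantCount_of_le_right y s le_rfl, ZMod.val_zero,
      quadrantCount_of_neg_right x s (by omega), quadrantCount_of_neg_right y s (by omega)]
    ring
  · rw [val_sub_one_of_ne_zero hb]

lemma quadrantCount_corner (z : GridGen N) (a b : ZMod N) :
    quadrantCount z a.val b.val - quadrantCount z (a.val - 1) b.val -
        quadrantCount z a.val (b.val - 1) + quadrantCount z (a.val - 1) (b.val - 1) =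
      if z a = b then 1 else 0 := by
  have hterm : ∀ i : ZMod N,
      ((if (i.val : ℤ) ≤ a.val ∧ ((z i).val : ℤ) ≤ b.val then 1 else 0) -
          (if (i.val : ℤ) ≤ a.val - 1 ∧ ((z i).val : ℤ) ≤ b.val then 1 else 0) -
          (if (i.val : ℤ) ≤ a.val ∧ ((z i).val : ℤ) ≤ b.val - 1 then 1 else 0) +
          (if (i.val : ℤ) ≤ a.val - 1 ∧ ((z i).val : ℤ) ≤ b.val - 1 then 1 else 0) : ℤ) =
        if i = a ∧ z i = b then 1 else 0 := by
    intro i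
    have hi : i = a ↔ (i.val : ℤ) = a.val := by
      rw [Nat.cast_inj, (ZMod.val_injective N).eq_iff]
    have hz : z i = b ↔ ((z i).val : ℤ) = b.val := by
      rw [Nat.cast_inj, (ZMod.val_injective N).eq_iff]
    simp only [hi, hz]
    split_ifs <;> omega
  simp only [quadrantCount]
  rw [← sum_sub_distrib, ← sum_sub_distrib, ← sum_add_distrib, sum_congr rfl fun i _ => hterm i]
  simp [ite_and]

lemma cornerSum_stairDomain (a b : ZMod N) :
    cornerSum N (stairDomain x y) a b =
      (if x a = b then 1 else 0) - (if y a = b then 1 else 0) := by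
  simp only [cornerSum, stairDomain, staircase_val_sub_one_left, staircase_val_sub_one_right]
  rw [← quadrantCount_corner x, ← quadrantCount_corner y]
  simp only [staircase]
  ring

lemma isGridDomain_stairDomain : IsGridDomain N x y (stairDomain x y) := by
  intro a b
  rw [cornerSum_stairDomain]
  split_ifs <;> simp_all

lemma quadrantCount_average (z : GridGen N) (a b : ZMod N) :
    ((quadrantCount z a.val b.val + quadrantCount z (a.val - 1) b.val +
        quadrantCount z a.val (b.val - 1) + quadrantCount z (a.val - 1) (b.val - 1) : ℤ) : ℚ) / 4 =
      ∑ j, quadrantWeight (genPt N a b) (genPts z j) := by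
  simp only [quadrantCount, quadrantWeight, genPts, genPt, heaviside_natCast_sub]
  push_cast
  rw [← sum_add_distrib, ← sum_add_distrib, ← sum_add_distrib, sum_div]
  refine sum_congr rfl fun j _ => ?_
  split_ifs <;> (try norm_num) <;> omega

lemma quadrantCount_markPt (z σ : GridGen N) (i : ZMod N) :
    ((quadrantCount z i.val (σ i).val : ℤ) : ℚ) =
      ∑ j, quadrantWeight (markPt N σ i) (genPts z j) := by
  simp only [quadrantCount, quadrantWeight, markPt, genPts, genPt, heaviside_natCast_add_half_sub]
  push_cast
  refine sum_congr rfl fun j _ => ?_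
  split_ifs <;> (try norm_num) <;> omega

lemma gridNp_stairDomain (a b : ZMod N) :
    gridNp N (stairDomain x y) a b =
      ∑ j, quadrantWeight (genPt N a b) (genPts x j) -
        ∑ j, quadrantWeight (genPt N a b) (genPts y j) := by
  rw [← quadrantCount_average x, ← quadrantCount_average y]
  simp only [gridNp, stairDomain, staircase_val_sub_one_left, staircase_val_sub_one_right]
  simp only [staircase]
  push_cast
  ring

lemma maslovIndex_stairDomain :
    maslovIndex N x y (stairDomain x y) =
      pairing quadrantWeight (genPts x) (genPts x) - pairing quadrantWeight (genPts x) (genPts y) +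
        (pairing quadrantWeight (genPts y) (genPts x) -
          pairing quadrantWeight (genPts y) (genPts y)) := by
  simp only [maslovIndex, gridNp_stairDomain, pairing, sum_add_distrib, sum_sub_distrib]
  rfl

lemma sum_stairDomain_markPt (σO : GridGen N) :
    ∑ i, (stairDomain x y i (σO i) : ℚ) =
      pairing quadrantWeight (markPt N σO) (genPts x) -
        pairing quadrantWeight (markPt N σO) (genPts y) := by
  simp only [stairDomain, staircase, Int.cast_sub, quadrantCount_markPt, pairing, sum_sub_distrib]

lemma maslovGrading_sub_eq_stairDomain (σO : GridGen N) :
    MaslovGrading N σO x - MaslovGrading N σO y =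
      maslovIndex N x y (stairDomain x y) - 2 * ∑ i, (stairDomain x y i (σO i) : ℚ) := by
  have hKX := pairing_quadrantWeight_genPts_sub x y (genPts x)
  have hKY := pairing_quadrantWeight_genPts_sub x y (genPts y)
  have hKO := pairing_quadrantWeight_genPts_sub x y (markPt N σO)
  have hXX : pairing tieIndicator (genPts x) (genPts x) =
      pairing tieIndicator (genPts y) (genPts y) := by
    simp only [pairing, tieIndicator_genPts]
  have hOX : ∀ z : GridGen N, pairing tieIndicator (markPt N σO) (genPts z) = 0 := fun z => by
    simp only [pairing, tieIndicator_markPt_genPts, sum_const_zero]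
  have hJ := pairing_comm Jpt_comm (genPts x) (genPts y)
  have hT := pairing_comm tieIndicator_comm (genPts x) (genPts y)
  rw [maslovIndex_stairDomain, sum_stairDomain_markPt, hKX, hKY, hKO, maslovGrading_eq_pairing,
    maslovGrading_eq_pairing, hOX, hOX]
  linarith

end StairDomain

section Kernel

variable {N : ℕ} [NeZero N] {E : ZMod N → ZMod N → ℤ}

lemma apply_eq_apply_zero_of_shift_invariant {α : Type*} {φ : ZMod N → α}
    (h : ∀ b, φ b = φ (b - 1)) (b : ZMod N) : φ b = φ 0 := by
  rw [← ZMod.natCast_zmod_val b]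
  induction b.val with
  | zero => rw [Nat.cast_zero]
  | succ k ih => rw [h, Nat.cast_succ, add_sub_cancel_right, ih]

lemma eq_add_of_cornerSum_eq_zero (hE : ∀ a b, cornerSum N E a b = 0) (a b : ZMod N) :
    E a b = E a 0 + E 0 b - E 0 0 := by
  have hcol : ∀ a b, E a b - E (a - 1) b = E a 0 - E (a - 1) 0 := fun a =>
    apply_eq_apply_zero_of_shift_invariant (φ := fun b => E a b - E (a - 1) b) fun b => by
      have := hE a b
      simp only [cornerSum] at this
      linarith
  have hrow := apply_eq_apply_zero_of_shift_invariant (φ := fun a => E a b - E a 0)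
    (fun a => by linarith [hcol a b]) a
  linarith

lemma sum_apply_perm_apply_perm_of_eq_add {ι : Type*} [Fintype ι] {F : ι → ι → ℚ} {f g : ι → ℚ}
    (hF : ∀ a b, F a b = f a + g b) (π ρ : Equiv.Perm ι) :
    ∑ i, F (π i) (ρ i) = ∑ i, f i + ∑ i, g i := by
  simp only [hF, sum_add_distrib, Equiv.sum_comp]

lemma sum_gridNp_of_cornerSum_eq_zero (hE : ∀ a b, cornerSum N E a b = 0) (σ τ : GridGen N) :
    ∑ i, gridNp N E i (σ i) = ∑ i, (E i (τ i) : ℚ) := by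
  have hF : ∀ a b, (E a b : ℚ) = E a 0 + ((E 0 b : ℚ) - E 0 0) := fun a b => by
    rw [eq_add_of_cornerSum_eq_zero hE a b]
    push_cast
    ring
  have hsum := sum_apply_perm_apply_perm_of_eq_add hF
  let δ : Equiv.Perm (ZMod N) := Equiv.subRight 1
  have hσ := hsum 1 σ
  have hleft := hsum δ σ
  have hdown := hsum 1 (σ.trans δ)
  have hdiag := hsum δ (σ.trans δ)
  have hτ := hsum 1 τ
  simp only [Equiv.Perm.coe_one, id, Equiv.trans_apply, δ, Equiv.subRight_apply]
    at hσ hleft hdown hdiag hτ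
  simp only [gridNp, ← sum_div, sum_add_distrib]
  rw [hσ, hleft, hdown, hdiag, hτ]
  ring

lemma maslovIndex_of_cornerSum_eq_zero (hE : ∀ a b, cornerSum N E a b = 0) (x y σO : GridGen N) :
    maslovIndex N x y E = 2 * ∑ i, (E i (σO i) : ℚ) := by
  rw [maslovIndex, sum_add_distrib, sum_gridNp_of_cornerSum_eq_zero hE x σO,
    sum_gridNp_of_cornerSum_eq_zero hE y σO]
  ring

lemma maslovIndex_sub (x y : GridGen N) (D D' : ZMod N → ZMod N → ℤ) :
    maslovIndex N x y (D - D') = maslovIndex N x y D - maslovIndex N x y D' := by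
  rw [maslovIndex, maslovIndex, maslovIndex, ← sum_sub_distrib]
  refine sum_congr rfl fun i _ => ?_
  simp only [gridNp, Pi.sub_apply]
  push_cast
  ring

lemma maslovIndex_sub_sum_eq_of_isGridDomain {x y : GridGen N}
    {D D' : ZMod N → ZMod N → ℤ} (hD : IsGridDomain N x y D) (hD' : IsGridDomain N x y D')
    (σO : GridGen N) :
    maslovIndex N x y D - 2 * ∑ i, (D i (σO i) : ℚ) =
      maslovIndex N x y D' - 2 * ∑ i, (D' i (σO i) : ℚ) := by
  have hker : ∀ a b, cornerSum N (D - D') a b = 0 := fun a b => by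
    have h := hD a b
    have h' := hD' a b
    simp only [cornerSum, Pi.sub_apply] at h h' ⊢
    linarith
  have hdiff := maslovIndex_of_cornerSum_eq_zero hker x y σO
  simp only [maslovIndex_sub, Pi.sub_apply, Int.cast_sub, sum_sub_distrib] at hdiff
  linarith

end Kernel

end

theorem absolute_refines_relative_maslov_general (N : ℕ) [NeZero N]
    (σO : GridGen N)
    (x y : GridGen N) (D : ZMod N → ZMod N → ℤ) (hD : IsGridDomain N x y D) :
    MaslovGrading N σO x - MaslovGrading N σO y =
      maslovIndex N x y D - 2 * ∑ i : ZMod N, (D i (σO i) : ℚ) := by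
  rw [maslovIndex_sub_sum_eq_of_isGridDomain hD (isGridDomain_stairDomain x y) σO]
  exact maslovGrading_sub_eq_stairDomain x y σO

/-- For generators `x, y` and any `D ∈ 𝒟(x,y)`,
`M(x) − M(y) = μ(D) − 2·Σᵢ n_{Oᵢ}(D)`: the absolute Maslov grading refines the
relative Maslov grading computed from domains. -/
theorem absolute_refines_relative_maslov (N : ℕ) [NeZero N] (hN : 2 ≤ N)
    (σO σX : GridGen N) (hσ : ∀ i : ZMod N, σO i ≠ σX i)
    (x y : GridGen N) (D : ZMod N → ZMod N → ℤ) (hD : IsGridDomain N x y D) :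
    MaslovGrading N σO x - MaslovGrading N σO y =
      maslovIndex N x y D - 2 * ∑ i : ZMod N, (D i (σO i) : ℚ) :=
  absolute_refines_relative_maslov_general N σO x y D hD
end
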